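/- For each index i, if deg D_{e_i} > 0 then α divides e_i. -/

import Mathlib

/-!
Put `n = e_i`. For `j ≠ i` the exponent `a_i` divides `ℓ_j`, so `α_j ∣ e_i` and the ceiling
`⌈n β_j / α_j⌉` is exact. The congruence `e_j β_j ≡ -1 (mod α_j)` makes `α_j` coprime to `e_j`,
hence to every `α_k ∣ e_j` with `k ≠ j`: the `α_j` are pairwise coprime. If `α_i = 1`, every `α_j`
divides `e_i`, and so does their product `α`. If `α_i ≥ 2`, the ceiling at `j = i` overshoots
`n β_i / α_i` by exactly `1 / α_i`, and the degree collapses to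
`e_i ∏ a / ℓ² - ĝ_i / α_i = ĝ / a_i - ĝ / a_i = 0`.
-/

open Finset Function

theorem isCoprime_of_dvd_mul_add_one {R : Type*} [CommRing R] {a b c : R} (h : a ∣ b * c + 1) :
    IsCoprime a b := by
  obtain ⟨s, hs⟩ := h
  exact ⟨s, -c, by linear_combination -hs⟩

theorem pairwise_isCoprime_of_dvd {ι R : Type*} [CommSemiring R] {α e : ι → R}
    (hdvd : ∀ j k, j ≠ k → α j ∣ e k) (hcop : ∀ j, IsCoprime (α j) (e j)) :
    Pairwise (IsCoprime on α) :=
  fun j k hjk => ((hcop k).of_isCoprime_of_dvd_right (hdvd j k hjk)).symm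

section Ceil

variable {K : Type*} [Field K] [LinearOrder K] [IsStrictOrderedRing K] [FloorRing K]

theorem Int.ceil_natCast_div_of_dvd {n d : ℕ} (h : d ∣ n) :
    (⌈(n : K) / d⌉ : K) = n / d := by
  rw [← Nat.cast_div_charZero h, Int.ceil_natCast, Int.cast_natCast]

theorem Int.ceil_natCast_div_of_dvd_add_one {n d : ℕ} (hd : 2 ≤ d) (h : d ∣ n + 1) :
    (⌈(n : K) / d⌉ : K) = n / d + 1 / d := by
  obtain ⟨q, hq⟩ := h
  have hd' : (2 : K) ≤ d := by exact_mod_cast hd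
  have hx : (n : K) / d = q - 1 / d := by
    have : (n : K) + 1 = d * q := by exact_mod_cast hq
    field_simp
    linarith
  have hinv : 0 < 1 / (d : K) ∧ 1 / (d : K) < 1 := by
    constructor
    · positivity
    · rw [div_lt_one (by positivity)]; linarith
  have hceil : ⌈(n : K) / d⌉ = q := by
    rw [Int.ceil_eq_iff, hx]
    push_cast
    constructor <;> linarith
  rw [hceil, hx]
  push_cast
  ring

theorem sum_mul_ceil_div_eq {ι : Type*} [Fintype ι] [DecidableEq ι] (w β α : ι → ℕ) {n : ℕ}
    {i : ι} (hdvd : ∀ j, j ≠ i → α j ∣ n) (hi : 2 ≤ α i) (hi' : α i ∣ n * β i + 1) :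
    ∑ j, (w j : K) * ⌈(n : K) * β j / α j⌉ = n * ∑ j, (w j : K) * β j / α j + w i / α i := by
  have hceil : ∀ j, (⌈(n : K) * β j / α j⌉ : K)
      = n * β j / α j + if j = i then 1 / (α i : K) else 0 := by
    intro j
    by_cases hj : j = i
    · subst hj
      simpa using Int.ceil_natCast_div_of_dvd_add_one (K := K) hi hi'
    · rw [if_neg hj, add_zero]
      exact_mod_cast Int.ceil_natCast_div_of_dvd (K := K) ((hdvd j hj).mul_right (β j))
  simp_rw [hceil, mul_add, sum_add_distrib, mul_sum, mul_ite, mul_zero, sum_ite_eq', mem_univ,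
    if_true]
  congr 1
  · exact sum_congr rfl fun j _ => by ring
  · ring

end Ceil

section LcmExponents

variable {ι : Type*} [DecidableEq ι]

theorem Finset.lcm_div_lcm_erase_dvd_lcm_div (s : Finset ι) (a : ι → ℕ) {j k : ι} (hk : k ∈ s)
    (hjk : j ≠ k) : s.lcm a / (s.erase j).lcm a ∣ s.lcm a / a k :=
  Nat.div_dvd_div_left (lcm_mono (erase_subset j s)) (dvd_lcm (mem_erase.2 ⟨hjk.symm, hk⟩))

variable [Fintype ι]

theorem prod_div_lcm_mul_lcm_div_lcm_erase (a : ι → ℕ) (i : ι) :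
    (∏ j, a j) / univ.lcm a * (univ.lcm a / (univ.erase i).lcm a)
      = a i * ((∏ j ∈ univ.erase i, a j) / (univ.erase i).lcm a) := by
  rw [Nat.div_mul_div (lcm_dvd_prod _ _) (lcm_mono (erase_subset i univ)),
    ← mul_prod_erase univ a (mem_univ i), Nat.mul_div_assoc _ (lcm_dvd_prod _ _)]

theorem natCast_lcm_div_mul_prod_div_sq {K : Type*} [Field K] [CharZero K] {a : ι → ℕ}
    (ha : ∀ j, a j ≠ 0) {i : ι} {ℓ ℓi α e g gi : ℕ} (hℓ : ℓ = univ.lcm a)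
    (hℓi : ℓi = (univ.erase i).lcm a) (hα : α = ℓ / ℓi) (he : e = ℓ / a i)
    (hg : g = (∏ j, a j) / ℓ) (hgi : gi = g * α / a i) :
    (e : K) * ((∏ j, (a j : K)) / (ℓ : K) ^ 2) = gi / α := by
  have hdvd : a i ∣ g * α := by
    rw [hg, hα, hℓ, hℓi, prod_div_lcm_mul_lcm_div_lcm_erase]
    exact dvd_mul_right _ _
  have hℓ0 : (ℓ : K) ≠ 0 := by
    rw [hℓ, Nat.cast_ne_zero, Ne, Finset.lcm_eq_zero_iff]
    simpa using ha
  have hℓi0 : (ℓi : K) ≠ 0 := by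
    rw [hℓi, Nat.cast_ne_zero, Ne, Finset.lcm_eq_zero_iff]
    simpa using fun j _ => ha j
  have hai : (a i : K) ≠ 0 := Nat.cast_ne_zero.2 (ha i)
  have hℓ_dvd : ℓ ∣ ∏ j, a j := hℓ ▸ lcm_dvd_prod _ _
  have hℓi_dvd : ℓi ∣ ℓ := hℓ ▸ hℓi ▸ lcm_mono (erase_subset i univ)
  have hai_dvd : a i ∣ ℓ := hℓ ▸ dvd_lcm (mem_univ i)
  rw [hgi, Nat.cast_div_charZero hdvd, Nat.cast_mul, hg, hα, he, Nat.cast_div_charZero hℓ_dvd,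
    Nat.cast_div_charZero hℓi_dvd, Nat.cast_div_charZero hai_dvd, Nat.cast_prod]
  field_simp

end LcmExponents

theorem brieskorn_alpha_dvd_e_general
    (m : ℕ) (a : Fin m → ℕ)
    (ha : ∀ i, 2 ≤ a i)
    (ℓ : ℕ) (hℓ : ℓ = Finset.univ.lcm a)
    (ℓi : Fin m → ℕ) (hℓi : ∀ i, ℓi i = (Finset.univ.erase i).lcm a)
    (α : Fin m → ℕ) (hα : ∀ i, α i = ℓ / ℓi i)
    (αp : ℕ) (hαp : αp = ∏ i, α i)
    (e : Fin m → ℕ) (he : ∀ i, e i = ℓ / a i)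
    (g : ℕ) (hg : g = (∏ i, a i) / ℓ)
    (gi : Fin m → ℕ) (hgi : ∀ i, gi i = g * α i / a i)
    (β : Fin m → ℕ) (hβ' : ∀ i, α i ∣ e i * β i + 1)
    (c₀ : ℤ)
    (hc₀ : (c₀ : ℚ) = (∑ i, (gi i : ℚ) * (β i : ℚ) / (α i : ℚ))
        + (∏ i, (a i : ℚ)) / (ℓ : ℚ) ^ 2)
    (degD : ℕ → ℤ)
    (hdegD : ∀ n : ℕ, degD n
        = (n : ℤ) * c₀ - ∑ i, (gi i : ℤ) * ⌈((n : ℚ) * (β i : ℚ)) / (α i : ℚ)⌉)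
    :
    ∀ i : Fin m, 0 < degD (e i) → αp ∣ e i := by
  intro i hpos
  have hαe : ∀ j k, j ≠ k → α j ∣ e k := fun j k hjk => by
    rw [hα, he, hℓi, hℓ]
    exact univ.lcm_div_lcm_erase_dvd_lcm_div a (mem_univ k) hjk
  have hα0 : α i ≠ 0 := ne_zero_of_dvd_ne_zero (Nat.succ_ne_zero _) (hβ' i)
  rcases (show α i = 1 ∨ 2 ≤ α i by omega) with hi | hi
  · rw [hαp, ← Int.natCast_dvd_natCast, Nat.cast_prod]
    have hcop : Pairwise (IsCoprime on fun j => (α j : ℤ)) :=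
      pairwise_isCoprime_of_dvd (e := fun j => (e j : ℤ))
        (fun j k hjk => Int.natCast_dvd_natCast.2 (hαe j k hjk))
        (fun j => isCoprime_of_dvd_mul_add_one (c := (β j : ℤ)) (by exact_mod_cast hβ' j))
    refine Fintype.prod_dvd_of_coprime hcop fun j => ?_
    rcases eq_or_ne j i with rfl | hj
    · simp [hi]
    · exact Int.natCast_dvd_natCast.2 (hαe j i hj)
  · have hdeg : (degD (e i) : ℚ) = 0 := by
      rw [hdegD]
      push_cast
      rw [sum_mul_ceil_div_eq gi β α (fun j hj => hαe j i hj) hi (hβ' i), hc₀, mul_add,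
        natCast_lcm_div_mul_prod_div_sq (fun j => by have := ha j; omega) hℓ (hℓi i) (hα i)
          (he i) hg (hgi i)]
      ring
    exact absurd hpos (by exact_mod_cast hdeg.le.not_gt)

/-- For each index `i`, if `deg D_{e i} > 0` then `α` divides `e i`. -/
theorem brieskorn_alpha_dvd_e
    (m : ℕ) (hm : 3 ≤ m) (a : Fin m → ℕ)
    (ha : ∀ i, 2 ≤ a i) (hmono : Monotone a)
    (ℓ : ℕ) (hℓ : ℓ = Finset.univ.lcm a)
    (ℓi : Fin m → ℕ) (hℓi : ∀ i, ℓi i = (Finset.univ.erase i).lcm a)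
    (α : Fin m → ℕ) (hα : ∀ i, α i = ℓ / ℓi i)
    (αp : ℕ) (hαp : αp = ∏ i, α i)
    (e : Fin m → ℕ) (he : ∀ i, e i = ℓ / a i)
    (g : ℕ) (hg : g = (∏ i, a i) / ℓ)
    (gi : Fin m → ℕ) (hgi : ∀ i, gi i = g * α i / a i)
    (β : Fin m → ℕ) (hβ : ∀ i, β i < α i) (hβ' : ∀ i, α i ∣ e i * β i + 1)
    (c₀ : ℤ) (hc₀pos : 0 < c₀)
    (hc₀ : (c₀ : ℚ) = (∑ i, (gi i : ℚ) * (β i : ℚ) / (α i : ℚ))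
        + (∏ i, (a i : ℚ)) / (ℓ : ℚ) ^ 2)
    (degD : ℕ → ℤ)
    (hdegD : ∀ n : ℕ, degD n
        = (n : ℤ) * c₀ - ∑ i, (gi i : ℤ) * ⌈((n : ℚ) * (β i : ℚ)) / (α i : ℚ)⌉)
    :
    ∀ i : Fin m, 0 < degD (e i) → αp ∣ e i :=
  brieskorn_alpha_dvd_e_general m a ha ℓ hℓ ℓi hℓi α hα αp hαp e he g hg gi hgi β hβ' c₀ hc₀ degD
    hdegD
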